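/- (Gordon Brown's formula) Let $\mathfrak{g}$ be a complex semisimple Lie algebra with Cartan subalgebra $\mathfrak{h}$, root system $\Phi$ with a choice of positive roots $\Phi^+$, and let $\langle\cdot,\cdot\rangle$ denote the inner product on the real span of the roots induced by the Killing form. Then $2 \sum_{\theta \in \Phi^+} \langle\theta,\theta\rangle = \dim \mathfrak{h}$. -/

import Mathlib

/-! The Killing form restricted to `𝔥` is `∑_{α ∈ Φ} α ⊗ α`. Composing it with the inverse
`t : 𝔥* ≃ 𝔥` of the duality it induces shows that `∑_{α ∈ Φ} α(·) t(α)` is the identity of `𝔥`;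
its trace is `∑_{α ∈ Φ} α(t α) = ∑_{α ∈ Φ} ⟨α, α⟩ = dim 𝔥`, and since `Φ = Φ⁺ ⊔ -Φ⁺` and
`⟨-α, -α⟩ = ⟨α, α⟩`, the sum over `Φ` is twice the sum over `Φ⁺`. -/

open Module LieAlgebra LieModule
open scoped Pointwise

theorem Finset.sum_union_neg_eq_two_nsmul {G M : Type*} [InvolutiveNeg G] [DecidableEq G]
    [AddCommMonoid M] {s : Finset G} (hs : ∀ a ∈ s, -a ∉ s) {g : G → M}
    (hg : ∀ a, g (-a) = g a) :
    ∑ a ∈ s ∪ -s, g a = 2 • ∑ a ∈ s, g a := by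
  have hdisj : Disjoint s (-s) :=
    Finset.disjoint_left.mpr fun a ha hna ↦ hs a ha (Finset.mem_neg'.mp hna)
  rw [Finset.sum_union hdisj, Finset.sum_neg_index, two_nsmul]
  simp only [hg]

theorem LinearMap.BilinForm.sum_apply_toDual_symm_eq_finrank {K V ι : Type*} [Field K]
    [AddCommGroup V] [Module K V] [FiniteDimensional K V] (B : LinearMap.BilinForm K V)
    (hB : B.Nondegenerate) (s : Finset ι) (f : ι → Dual K V)
    (hsum : B = ∑ i ∈ s, (f i).smulRight (f i)) :
    ∑ i ∈ s, f i ((B.toDual hB).symm (f i)) = finrank K V := by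
  have hid : ∑ i ∈ s, (f i).smulRight ((B.toDual hB).symm (f i)) = LinearMap.id :=
    calc _ = (B.toDual hB).symm.toLinearMap ∘ₗ ∑ i ∈ s, (f i).smulRight (f i) := by
          ext x; simp
      _ = LinearMap.id := by
          rw [← hsum]; ext x; exact (B.toDual hB).symm_apply_apply x
  rw [← LinearMap.trace_id, ← hid, map_sum]
  simp only [LinearMap.trace_smulRight]

namespace LieAlgebra.IsKilling

variable {K L : Type*} [Field K] [CharZero K] [LieRing L] [LieAlgebra K L]
  [FiniteDimensional K L] (H : LieSubalgebra K L) [H.IsCartanSubalgebra]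

lemma mem_image_root_iff [DecidableEq (Dual K H)] {α : Dual K H} :
    α ∈ H.root.image (fun β : Weight K H L ↦ (β : Dual K H)) ↔
      α ≠ 0 ∧ rootSpace H (α : H → K) ≠ ⊥ := by
  rw [Finset.mem_image]
  constructor
  · rintro ⟨β, hβ, rfl⟩
    exact ⟨Weight.coe_toLinear_ne_zero_iff.mpr (by simpa using hβ), β.genWeightSpace_ne_bot⟩
  · rintro ⟨hne, hrs⟩
    have hroot : (⟨α, hrs⟩ : Weight K H L) ∈ H.root :=
      Finset.mem_filter.mpr ⟨Finset.mem_univ _, fun h ↦ hne (LinearMap.ext (congrFun h))⟩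
    exact ⟨⟨α, hrs⟩, hroot, rfl⟩

lemma injOn_coe_root : Set.InjOn (fun β : Weight K H L ↦ (β : Dual K H)) H.root :=
  fun _ _ _ _ h ↦ Weight.ext (LinearMap.congr_fun h)

variable [IsKilling K L] [IsTriangularizable K H L]

lemma sum_root_apply_cartanEquivDual_symm :
    ∑ α ∈ H.root, (α : Dual K H) ((cartanEquivDual H).symm α) = finrank K H :=
  LinearMap.BilinForm.sum_apply_toDual_symm_eq_finrank _ _ _ _ restrict_killingForm_eq_sum

end LieAlgebra.IsKilling

/-- Gordon Brown's formula: Let `𝔤 = L` be a complex semisimple Lie algebra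
(equivalently, finite-dimensional with nondegenerate Killing form), `𝔥 = H` a Cartan
subalgebra, `Φ⁺` a choice of positive roots (so that `Φ⁺ ⊔ -Φ⁺` is the set of roots), and let
`B` be the bilinear form on `𝔥*` induced via duality by the Killing form of `𝔤`.  Then
`2 ∑_{θ ∈ Φ⁺} B(θ,θ) = dim 𝔥`. -/
theorem gordon_brown_formula
    {L : Type*} [LieRing L] [LieAlgebra ℂ L] [Module.Finite ℂ L] [LieAlgebra.IsKilling ℂ L]
    (H : LieSubalgebra ℂ L) [H.IsCartanSubalgebra]
    (Φplus : Finset (Module.Dual ℂ H))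
    -- `Φ⁺ ∪ (-Φ⁺)` is exactly the set of (nonzero) roots of `𝔤` w.r.t. `𝔥`:
    (hroots : ∀ α : Module.Dual ℂ H,
      ((α ∈ Φplus ∨ -α ∈ Φplus) ↔ (α ≠ 0 ∧ rootSpace H (α : H → ℂ) ≠ ⊥)))
    (hdisj : ∀ α ∈ Φplus, -α ∉ Φplus)
    -- `B` is the form on `𝔥*` induced by the Killing form via the duality `𝔥 ≃ 𝔥*`:
    (B : Module.Dual ℂ H → Module.Dual ℂ H → ℂ)
    (hB : ∀ f g : Module.Dual ℂ H,
      B f g = traceForm ℂ H L ((LieAlgebra.IsKilling.cartanEquivDual H).symm f)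
        ((LieAlgebra.IsKilling.cartanEquivDual H).symm g)) :
    2 * ∑ θ ∈ Φplus, B θ θ = (Module.finrank ℂ H : ℂ) := by
  classical
  set t := (IsKilling.cartanEquivDual H).symm
  have hB_self (θ : Dual ℂ H) : B θ θ = θ (t θ) := by
    rw [hB]; exact LinearMap.BilinForm.apply_toDual_symm_apply θ (t θ)
  have himage : H.root.image (fun β : Weight ℂ H L ↦ (β : Dual ℂ H)) = Φplus ∪ -Φplus := by
    ext α
    rw [IsKilling.mem_image_root_iff, ← hroots, Finset.mem_union, Finset.mem_neg']
  calc 2 * ∑ θ ∈ Φplus, B θ θ = ∑ θ ∈ Φplus ∪ -Φplus, θ (t θ) := by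
        rw [Finset.sum_union_neg_eq_two_nsmul hdisj (by simp), nsmul_eq_mul]
        simp only [hB_self, Nat.cast_ofNat]
    _ = ∑ α ∈ H.root, (α : Dual ℂ H) (t α) := by
        rw [← himage, Finset.sum_image (IsKilling.injOn_coe_root H)]
    _ = finrank ℂ H := IsKilling.sum_root_apply_cartanEquivDual_symm H
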